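/- Let p ∈ [0,1], let A_p be the amplitude damping channel, and let (A_p)_P be its Pauli twirl. Then for every pure state ψ_{RA} on ℂ²⊗ℂ², ‖(id_R ⊗ A_p)(Φ_{RA}) − (id_R ⊗ (A_p)_P)(Φ_{RA})‖₁ ≥ ‖(id_R ⊗ A_p)(ψ_{RA}) − (id_R ⊗ (A_p)_P)(ψ_{RA})‖₁, where Φ_{RA} is the maximally entangled state; moreover ‖(id_R ⊗ A_p)(Φ_{RA}) − (id_R ⊗ (A_p)_P)(Φ_{RA})‖₁ = p. -/

import Mathlib

open scoped BigOperators Kronecker ComplexOrder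
open Matrix MeasureTheory Filter

noncomputable section

abbrev Mat (n : ℕ) := Matrix (Fin n) (Fin n) ℂ

/-- A density matrix: positive semidefinite with unit trace. -/
def IsDensity {ι : Type} [Fintype ι] (ρ : Matrix ι ι ℂ) : Prop :=
  ρ.PosSemidef ∧ ρ.trace = 1

/-- The trace norm ‖M‖₁ = tr √(MᴴM). -/
def traceNorm {ι : Type} [Fintype ι] [DecidableEq ι] (M : Matrix ι ι ℂ) : ℝ :=
  ((Matrix.posSemidef_conjTranspose_mul_self M).1.eigenvectorUnitary.1
    * Matrix.diagonal (((↑) : ℝ → ℂ) ∘ (√·) ∘ (Matrix.posSemidef_conjTranspose_mul_self M).1.eigenvalues)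
    * (star (Matrix.posSemidef_conjTranspose_mul_self M).1.eigenvectorUnitary : Matrix ι ι ℂ)).trace.re

/-- The rank-one operator |v⟩⟨v| associated to a vector. -/
def vecState {ι : Type} (v : ι → ℂ) : Matrix ι ι ℂ :=
  Matrix.of fun i j => v i * star (v j)

/-- Partial trace over the first tensor factor. -/
def ptraceLeft {R A : Type} [Fintype R] (M : Matrix (R × A) (R × A) ℂ) : Matrix A A ℂ :=
  Matrix.of fun a a' => ∑ r, M (r, a) (r, a')

/-- Partial trace over the second tensor factor. -/
def ptraceRight {A E : Type} [Fintype E] (M : Matrix (A × E) (A × E) ℂ) : Matrix A A ℂ :=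
  Matrix.of fun a a' => ∑ e, M (a, e) (a', e)

/-- The extension id_R ⊗ Φ of a linear map on matrices. -/
def idTensor {R A B : Type} (Φ : Matrix A A ℂ →ₗ[ℂ] Matrix B B ℂ) :
    Matrix (R × A) (R × A) ℂ →ₗ[ℂ] Matrix (R × B) (R × B) ℂ where
  toFun M := Matrix.of fun p q => Φ (Matrix.of fun a a' => M (p.1, a) (q.1, a')) p.2 q.2
  map_add' M N := by
    ext p q
    have h : (Matrix.of fun a a' => M (p.1, a) (q.1, a') + N (p.1, a) (q.1, a'))
        = (Matrix.of fun a a' => M (p.1, a) (q.1, a'))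
          + (Matrix.of fun a a' => N (p.1, a) (q.1, a')) := by
      ext a a'; simp [Matrix.add_apply]
    simp only [Matrix.of_apply, Matrix.add_apply]
    rw [h, map_add]
    simp [Matrix.add_apply]
  map_smul' c M := by
    ext p q
    have h : (Matrix.of fun a a' => c • M (p.1, a) (q.1, a'))
        = c • (Matrix.of fun a a' => M (p.1, a) (q.1, a')) := by
      ext a a'; simp [Matrix.smul_apply]
    simp only [Matrix.of_apply, Matrix.smul_apply]
    rw [h, Φ.map_smul]
    simp [Matrix.smul_apply]

/-- A linear map is completely positive and trace preserving (a quantum channel). -/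
def IsCPTP {A B : Type} [Fintype A] [Fintype B] (Φ : Matrix A A ℂ →ₗ[ℂ] Matrix B B ℂ) : Prop :=
  (∀ (r : ℕ) (M : Matrix (Fin r × A) (Fin r × A) ℂ), M.PosSemidef → (idTensor Φ M).PosSemidef)
    ∧ ∀ M : Matrix A A ℂ, (Φ M).trace = M.trace

/-- The tensor product Φ ⊗ Ψ of two linear maps on matrices. -/
def tensorMap {A B C D : Type} [Fintype A] [DecidableEq A] [Fintype C]
    (Φ : Matrix A A ℂ →ₗ[ℂ] Matrix B B ℂ) (Ψ : Matrix C C ℂ →ₗ[ℂ] Matrix D D ℂ) :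
    Matrix (A × C) (A × C) ℂ →ₗ[ℂ] Matrix (B × D) (B × D) ℂ where
  toFun M := Matrix.of fun p q => ∑ a : A, ∑ a' : A,
      Φ (Matrix.single a a' 1) p.1 q.1
        * Ψ (Matrix.of fun c c' => M (a, c) (a', c')) p.2 q.2
  map_add' M N := by
    ext p q
    have h : ∀ a a' : A, (Matrix.of fun c c' => M (a, c) (a', c') + N (a, c) (a', c'))
        = (Matrix.of fun c c' => M (a, c) (a', c'))
          + (Matrix.of fun c c' => N (a, c) (a', c')) := by
      intro a a'; ext c c'; simp [Matrix.add_apply]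
    simp only [Matrix.of_apply, Matrix.add_apply]
    rw [← Finset.sum_add_distrib]
    refine Finset.sum_congr rfl fun a _ => ?_
    rw [← Finset.sum_add_distrib]
    refine Finset.sum_congr rfl fun a' _ => ?_
    rw [h a a', map_add]
    simp [Matrix.add_apply, mul_add]
  map_smul' k M := by
    ext p q
    have h : ∀ a a' : A, (Matrix.of fun c c' => k * M (a, c) (a', c'))
        = k • (Matrix.of fun c c' => M (a, c) (a', c')) := by
      intro a a'; ext c c'; simp [Matrix.smul_apply, smul_eq_mul]
    simp only [Matrix.of_apply, Matrix.smul_apply, smul_eq_mul, RingHom.id_apply]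
    rw [Finset.mul_sum]
    refine Finset.sum_congr rfl fun a _ => ?_
    rw [Finset.mul_sum]
    refine Finset.sum_congr rfl fun a' _ => ?_
    rw [h a a', Ψ.map_smul]
    simp only [Matrix.smul_apply, smul_eq_mul]
    ring
  
/-- The n-fold tensor power Φ^{⊗n} of a linear map on matrices. -/
def powMap {A B : Type} [Fintype A] [DecidableEq A] [Fintype B] [DecidableEq B]
    (Φ : Matrix A A ℂ →ₗ[ℂ] Matrix B B ℂ) :
    (n : ℕ) → (Matrix (Fin n → A) (Fin n → A) ℂ →ₗ[ℂ] Matrix (Fin n → B) (Fin n → B) ℂ)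
  | 0 => (Matrix.reindexLinearEquiv ℂ ℂ (Equiv.ofUnique (Fin 0 → A) (Fin 0 → B))
      (Equiv.ofUnique (Fin 0 → A) (Fin 0 → B))).toLinearMap
  | (n + 1) =>
      (Matrix.reindexLinearEquiv ℂ ℂ (Fin.insertNthEquiv (fun _ => B) 0).symm.symm
          (Fin.insertNthEquiv (fun _ => B) 0).symm.symm).toLinearMap
        ∘ₗ tensorMap Φ (powMap Φ n)
        ∘ₗ (Matrix.reindexLinearEquiv ℂ ℂ (Fin.insertNthEquiv (fun _ => A) 0).symm
          (Fin.insertNthEquiv (fun _ => A) 0).symm).toLinearMap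

open scoped Classical in
/-- The von Neumann entropy (base 2), via the eigenvalues of a Hermitian matrix. -/
def vnEntropy {ι : Type} [Fintype ι] [DecidableEq ι] (ρ : Matrix ι ι ℂ) : ℝ :=
  if h : ρ.IsHermitian then ∑ i, -(h.eigenvalues i * Real.logb 2 (h.eigenvalues i)) else 0

/-- The function g(ε) = (1+ε)log₂(1+ε) − ε log₂ ε (with the convention 0·log 0 = 0). -/
def gfun (x : ℝ) : ℝ := (1 + x) * Real.logb 2 (1 + x) - x * Real.logb 2 x

/-- A finite ensemble of density matrices. -/
structure Ensemble (A : Type) [Fintype A] where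
  m : ℕ
  p : Fin m → ℝ
  p_nonneg : ∀ i, 0 ≤ p i
  p_sum : ∑ i, p i = 1
  ρ : Fin m → Matrix A A ℂ
  ρ_density : ∀ i, IsDensity (ρ i)

/-- A finite ensemble of pure states, given by unit vectors. -/
structure PureEnsemble (A : Type) [Fintype A] where
  m : ℕ
  p : Fin m → ℝ
  p_nonneg : ∀ i, 0 ≤ p i
  p_sum : ∑ i, p i = 1
  v : Fin m → (A → ℂ)
  pure : ∀ i, IsDensity (vecState (v i))

/-- The Holevo information of a (channel given as a) linear map. -/
def holevoMap {A B : Type} [Fintype A] [Fintype B] [DecidableEq B]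
    (Φ : Matrix A A ℂ →ₗ[ℂ] Matrix B B ℂ) : ℝ :=
  ⨆ e : Ensemble A,
    (vnEntropy (Φ (∑ i, (e.p i : ℂ) • e.ρ i)) - ∑ i, e.p i * vnEntropy (Φ (e.ρ i)))

/-- The classical capacity: the regularized Holevo information. -/
def classicalCapacity {A B : Type} [Fintype A] [DecidableEq A] [Fintype B] [DecidableEq B]
    (Φ : Matrix A A ℂ →ₗ[ℂ] Matrix B B ℂ) : ℝ :=
  Filter.limsup (fun n : ℕ => holevoMap (powMap Φ n) / (n : ℝ)) Filter.atTop

/-- Half the diamond norm of the difference of two maps: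
the supremum over reference sizes and density inputs of half the output trace distance. -/
def diamondDist {A B : Type} [Fintype A] [Fintype B] [DecidableEq B]
    (Φ Ψ : Matrix A A ℂ →ₗ[ℂ] Matrix B B ℂ) : ℝ :=
  ⨆ r : ℕ, ⨆ ρ : {ρ : Matrix (Fin r × A) (Fin r × A) ℂ // IsDensity ρ},
    (1 / 2) * traceNorm (idTensor Φ ρ.1 - idTensor Ψ ρ.1)

/-- The diamond norm of the difference of two maps (without the factor 1/2). -/
def diamondDistFull {A B : Type} [Fintype A] [Fintype B] [DecidableEq B]
    (Φ Ψ : Matrix A A ℂ →ₗ[ℂ] Matrix B B ℂ) : ℝ :=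
  ⨆ r : ℕ, ⨆ ρ : {ρ : Matrix (Fin r × A) (Fin r × A) ℂ // IsDensity ρ},
    traceNorm (idTensor Φ ρ.1 - idTensor Ψ ρ.1)

/-- Conjugation ρ ↦ W ρ Wᴴ as a linear map. -/
def conjMap {ι κ : Type} [Fintype ι] [Fintype κ] (W : Matrix κ ι ℂ) :
    Matrix ι ι ℂ →ₗ[ℂ] Matrix κ κ ℂ where
  toFun ρ := W * ρ * Wᴴ
  map_add' ρ σ := by simp [Matrix.mul_add, Matrix.add_mul]
  map_smul' c ρ := by simp [Matrix.mul_smul, Matrix.smul_mul]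

/-- A classical–quantum state ∑ₓ p(x) |x⟩⟨x| ⊗ ρ(x). -/
def cqState {X ι : Type} [DecidableEq X] (p : X → ℝ) (ρ : X → Matrix ι ι ℂ) :
    Matrix (X × ι) (X × ι) ℂ :=
  Matrix.of fun a b => if a.1 = b.1 then (p a.1 : ℂ) * ρ a.1 a.2 b.2 else 0

/-- A generalized divergence: a family of real functionals on pairs of matrices, one for each
finite-dimensional system, satisfying the data-processing inequality under quantum channels. -/
structure GenDivergence where
  D : ∀ {ι : Type} [Fintype ι] [DecidableEq ι], Matrix ι ι ℂ → Matrix ι ι ℂ → ℝ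
  data_proc : ∀ {ι κ : Type} [Fintype ι] [DecidableEq ι] [Fintype κ] [DecidableEq κ]
      (Λ : Matrix ι ι ℂ →ₗ[ℂ] Matrix κ κ ℂ), IsCPTP Λ →
      ∀ ρ σ : Matrix ι ι ℂ, IsDensity ρ → σ.PosSemidef → D (Λ ρ) (Λ σ) ≤ D ρ σ

/-- The direct-sum property of a generalized divergence on classical–quantum states. -/
def HasDirectSum (𝒟 : GenDivergence) : Prop :=
  ∀ {X ι : Type} [Fintype X] [DecidableEq X] [Fintype ι] [DecidableEq ι]
    (p : X → ℝ), (∀ x, 0 ≤ p x) → (∑ x, p x) = 1 →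
    ∀ (ρ σ : X → Matrix ι ι ℂ), (∀ x, IsDensity (ρ x)) → (∀ x, IsDensity (σ x)) →
    𝒟.D (cqState p ρ) (cqState p σ) = ∑ x, p x * 𝒟.D (ρ x) (σ x)

/-- The generalized channel divergence: optimization over pure inputs with reference R ≅ A. -/
def chanDiv (𝒟 : GenDivergence) {A B : Type} [Fintype A] [DecidableEq A]
    [Fintype B] [DecidableEq B] (Φ Ψ : Matrix A A ℂ →ₗ[ℂ] Matrix B B ℂ) : ℝ :=
  ⨆ v : {v : A × A → ℂ // IsDensity (vecState v)},
    𝒟.D (idTensor Φ (vecState v.1)) (idTensor Ψ (vecState v.1))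

/-- The maximally entangled state on A ⊗ A. -/
def maxEnt (A : Type) [Fintype A] [DecidableEq A] : Matrix (A × A) (A × A) ℂ :=
  vecState (fun p => if p.1 = p.2 then (((Real.sqrt (Fintype.card A))⁻¹ : ℝ) : ℂ) else 0)

/-- The Choi operator of a linear map on matrices. -/
def choi {A B : Type} [Fintype A] [DecidableEq A]
    (Φ : Matrix A A ℂ →ₗ[ℂ] Matrix B B ℂ) : Matrix (A × B) (A × B) ℂ :=
  idTensor Φ (Matrix.of fun p q => if p.1 = p.2 ∧ q.1 = q.2 then 1 else 0)

/-- Separability of a bipartite operator: a finite sum of tensor products of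
positive semidefinite operators. -/
def IsSepState {A B : Type} [Fintype A] [Fintype B]
    (M : Matrix (A × B) (A × B) ℂ) : Prop :=
  ∃ (k : ℕ) (P : Fin k → Matrix A A ℂ) (Q : Fin k → Matrix B B ℂ),
    (∀ i, (P i).PosSemidef) ∧ (∀ i, (Q i).PosSemidef) ∧ M = ∑ i, P i ⊗ₖ Q i

/-- An entanglement-breaking channel: a channel whose Choi operator is separable. -/
def IsEBChannel {A B : Type} [Fintype A] [DecidableEq A] [Fintype B]
    (Φ : Matrix A A ℂ →ₗ[ℂ] Matrix B B ℂ) : Prop :=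
  IsCPTP Φ ∧ IsSepState (choi Φ)

/-- φ is a purification (with reference system R on the left) of the state ρ. -/
def IsPurification {R A : Type} [Fintype R] [Fintype A]
    (φ : Matrix (R × A) (R × A) ℂ) (ρ : Matrix A A ℂ) : Prop :=
  (∃ v : R × A → ℂ, φ = vecState v) ∧ IsDensity φ ∧ ptraceLeft φ = ρ

/-- The channel ρ ↦ tr_E (V ρ Vᴴ) induced by an isometry V : A → B ⊗ E. -/
def dilMap {A B E : Type} [Fintype A] [Fintype B] [Fintype E]
    (V : Matrix (B × E) A ℂ) : Matrix A A ℂ →ₗ[ℂ] Matrix B B ℂ where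
  toFun ρ := ptraceRight (V * ρ * Vᴴ)
  map_add' ρ σ := by
    ext a a'
    simp [ptraceRight, Matrix.mul_add, Matrix.add_mul, Matrix.add_apply,
      Finset.sum_add_distrib]
  map_smul' c ρ := by
    ext a a'
    simp [ptraceRight, Matrix.mul_smul, Matrix.smul_mul, Matrix.smul_apply,
      Finset.mul_sum, smul_eq_mul]

/-- The complementary channel ρ ↦ tr_B (V ρ Vᴴ) induced by an isometry V : A → B ⊗ E. -/
def complMap {A B E : Type} [Fintype A] [Fintype B] [Fintype E]
    (V : Matrix (B × E) A ℂ) : Matrix A A ℂ →ₗ[ℂ] Matrix E E ℂ where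
  toFun ρ := ptraceLeft (V * ρ * Vᴴ)
  map_add' ρ σ := by
    ext a a'
    simp [ptraceLeft, Matrix.mul_add, Matrix.add_mul, Matrix.add_apply,
      Finset.sum_add_distrib]
  map_smul' c ρ := by
    ext a a'
    simp [ptraceLeft, Matrix.mul_smul, Matrix.smul_mul, Matrix.smul_apply,
      Finset.mul_sum, smul_eq_mul]

/-- A Hadamard channel: some Stinespring dilation has entanglement-breaking complement. -/
def IsHadamardChan {A B : Type} [Fintype A] [DecidableEq A] [Fintype B] [DecidableEq B]
    (Φ : Matrix A A ℂ →ₗ[ℂ] Matrix B B ℂ) : Prop :=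
  ∃ (e : ℕ) (V : Matrix (B × Fin e) A ℂ), Vᴴ * V = 1 ∧
    (∀ ρ, Φ ρ = ptraceRight (V * ρ * Vᴴ)) ∧ IsSepState (choi (complMap V))

/-- Covariance of a channel with respect to unitary representations of a group. -/
def CovariantChan {G A B : Type} [Group G] [Fintype A] [DecidableEq A]
    [Fintype B] [DecidableEq B]
    (U : G →* Matrix.unitaryGroup A ℂ) (V : G →* Matrix.unitaryGroup B ℂ)
    (Φ : Matrix A A ℂ →ₗ[ℂ] Matrix B B ℂ) : Prop :=
  ∀ (g : G) (ρ : Matrix A A ℂ),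
    (V g : Matrix B B ℂ) * Φ ρ * (V g : Matrix B B ℂ)ᴴ
      = Φ ((U g : Matrix A A ℂ) * ρ * (U g : Matrix A A ℂ)ᴴ)

/-- A unitary 1-design: averaging over the group sends every matrix to tr(ρ)·I/d. -/
def IsOneDesign {G A : Type} [Group G] [Fintype G] [Fintype A] [DecidableEq A]
    (U : G →* Matrix.unitaryGroup A ℂ) : Prop :=
  ∀ ρ : Matrix A A ℂ,
    (Fintype.card G : ℂ)⁻¹ • ∑ g, (U g : Matrix A A ℂ) * ρ * (U g : Matrix A A ℂ)ᴴ
      = (ρ.trace * (Fintype.card A : ℂ)⁻¹) • (1 : Matrix A A ℂ)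

/-- Pauli X. -/
def σX : Mat 2 := !![0, 1; 1, 0]
/-- Pauli Y. -/
def σY : Mat 2 := !![0, -Complex.I; Complex.I, 0]
/-- Pauli Z. -/
def σZ : Mat 2 := !![1, 0; 0, -1]

/-- The Pauli twirl of a qubit channel. -/
def pauliTwirl (Φ : Mat 2 →ₗ[ℂ] Mat 2) : Mat 2 →ₗ[ℂ] Mat 2 :=
  ((4 : ℂ)⁻¹) • (Φ + conjMap σX ∘ₗ Φ ∘ₗ conjMap σX + conjMap σY ∘ₗ Φ ∘ₗ conjMap σY
    + conjMap σZ ∘ₗ Φ ∘ₗ conjMap σZ)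

/-- The amplitude damping channel with damping parameter p. -/
def ampDamp (p : ℝ) : Mat 2 →ₗ[ℂ] Mat 2 :=
  conjMap (!![1, 0; 0, ((Real.sqrt (1 - p) : ℝ) : ℂ)] : Mat 2)
    + conjMap (!![0, ((Real.sqrt p : ℝ) : ℂ); 0, 0] : Mat 2)

/-- The qubit depolarizing channel with parameter p. -/
def depol (p : ℝ) : Mat 2 →ₗ[ℂ] Mat 2 :=
  (((1 - p : ℝ) : ℂ)) • LinearMap.id
    + (((p / 3 : ℝ) : ℂ)) • (conjMap σX + conjMap σY + conjMap σZ)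

/-- The Z-dephasing channel with parameter p. -/
def deph (p : ℝ) : Mat 2 →ₗ[ℂ] Mat 2 :=
  (((1 - p : ℝ) : ℂ)) • LinearMap.id + ((p : ℝ) : ℂ) • conjMap σZ

/-- The entanglement-breaking parameter: distance to the nearest EB channel. -/
def ebParam {A B : Type} [Fintype A] [DecidableEq A] [Fintype B] [DecidableEq B]
    (Φ : Matrix A A ℂ →ₗ[ℂ] Matrix B B ℂ) : ℝ :=
  ⨅ M : {M : Matrix A A ℂ →ₗ[ℂ] Matrix B B ℂ // IsEBChannel M}, diamondDist Φ M.1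

end

/-! On every input `X`, `A_p X - (A_p)_P X = tr X • (p/2) Z`: the twirl only changes the
populations, replacing the decay `|1⟩ → |0⟩` by symmetric flips. Hence for any state `ρ_{RA}` the
output difference is `(p/2) ρ_R ⊗ Z`, and since `Z` is unitary its trace norm is `p` whatever
the input, so the maximally entangled state attains the maximum trivially. -/

open scoped MatrixOrder in
theorem traceNorm_eq_re_trace_of_mul_self_eq {ι : Type} [Fintype ι] [DecidableEq ι]
    {M S : Matrix ι ι ℂ} (hS : S.PosSemidef) (h : S * S = Mᴴ * M) :
    traceNorm M = S.trace.re := by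
  have hMM := posSemidef_conjTranspose_mul_self M
  have hsqrt : cfc Real.sqrt (Mᴴ * M) = S := by
    rw [← cfcₙ_eq_cfc (f := Real.sqrt) (a := Mᴴ * M) (by fun_prop) Real.sqrt_zero,
      ← CFC.sqrt_eq_real_sqrt _ hMM.nonneg, CFC.sqrt_unique h hS.nonneg]
  rw [hMM.1.cfc_eq] at hsqrt
  rw [← hsqrt]
  rfl

theorem traceNorm_kronecker_of_mem_unitaryGroup {ι κ : Type} [Fintype ι] [DecidableEq ι]
    [Fintype κ] [DecidableEq κ] {P : Matrix ι ι ℂ} {U : Matrix κ κ ℂ} (hP : P.PosSemidef)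
    (hU : U ∈ unitaryGroup κ ℂ) :
    traceNorm (P ⊗ₖ U) = P.trace.re * Fintype.card κ := by
  have hUU : Uᴴ * U = 1 := mem_unitaryGroup_iff'.mp hU
  rw [traceNorm_eq_re_trace_of_mul_self_eq (hP.kronecker PosSemidef.one)]
  · simp [trace_kronecker]
  · rw [conjTranspose_kronecker, ← mul_kronecker_mul, ← mul_kronecker_mul, hUU, hP.1.eq, mul_one]

theorem ptraceRight_eq_sum_submatrix {A E : Type} [Fintype E] (M : Matrix (A × E) (A × E) ℂ) :
    ptraceRight M = ∑ e, M.submatrix (·, e) (·, e) := by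
  ext a a'
  simp [ptraceRight, Matrix.sum_apply]

theorem Matrix.PosSemidef.ptraceRight {A E : Type} [Fintype A] [Fintype E]
    {M : Matrix (A × E) (A × E) ℂ} (hM : M.PosSemidef) : (ptraceRight M).PosSemidef := by
  rw [ptraceRight_eq_sum_submatrix]
  exact posSemidef_sum _ fun e _ => hM.submatrix _

theorem trace_ptraceRight {A E : Type} [Fintype A] [Fintype E] (M : Matrix (A × E) (A × E) ℂ) :
    (ptraceRight M).trace = M.trace := by
  simp [ptraceRight, trace, Fintype.sum_prod_type]

theorem IsDensity.ptraceRight {A E : Type} [Fintype A] [Fintype E]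
    {M : Matrix (A × E) (A × E) ℂ} (hM : IsDensity M) : IsDensity (ptraceRight M) :=
  ⟨hM.1.ptraceRight, (trace_ptraceRight M).trans hM.2⟩

theorem idTensor_sub {R A B : Type} (Φ Ψ : Matrix A A ℂ →ₗ[ℂ] Matrix B B ℂ)
    (M : Matrix (R × A) (R × A) ℂ) :
    idTensor Φ M - idTensor Ψ M = idTensor (Φ - Ψ) M := by
  ext p q
  simp [idTensor]

theorem idTensor_eq_ptraceRight_kronecker {R A B : Type} [Fintype A]
    {Φ : Matrix A A ℂ →ₗ[ℂ] Matrix B B ℂ} {C : Matrix B B ℂ} (hΦ : ∀ X, Φ X = X.trace • C)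
    (M : Matrix (R × A) (R × A) ℂ) :
    idTensor Φ M = ptraceRight M ⊗ₖ C := by
  ext p q
  simp [idTensor, hΦ, ptraceRight, trace]

theorem maxEnt_isDensity (A : Type) [Fintype A] [DecidableEq A] [Nonempty A] :
    IsDensity (maxEnt A) := by
  refine ⟨posSemidef_vecMulVec_self_star _, ?_⟩
  have hcard : (0 : ℝ) < Fintype.card A := by exact_mod_cast Fintype.card_pos
  simp only [maxEnt, vecState, trace, diag_apply, of_apply, Fintype.sum_prod_type]
  simp only [Complex.ofReal_inv, RCLike.star_def, ite_mul, zero_mul, Finset.sum_ite_eq,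
    Finset.mem_univ, ↓reduceIte, map_inv₀, Complex.conj_ofReal, Finset.sum_const,
    Finset.card_univ, nsmul_eq_mul]
  rw [← mul_inv, ← Complex.ofReal_mul, Real.mul_self_sqrt hcard.le, Complex.ofReal_natCast,
    mul_inv_cancel₀ (by positivity)]

theorem ampDamp_sub_pauliTwirl {p : ℝ} (hp₀ : 0 ≤ p) (hp₁ : p ≤ 1) (X : Mat 2) :
    (ampDamp p - pauliTwirl (ampDamp p)) X = X.trace • ((p / 2 : ℂ) • σZ) := by
  have hsq : ((√p : ℝ) : ℂ) ^ 2 = p := by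
    exact_mod_cast Real.sq_sqrt hp₀
  have hsq' : ((√(1 - p) : ℝ) : ℂ) ^ 2 = 1 - p := by
    exact_mod_cast Real.sq_sqrt (sub_nonneg.mpr hp₁)
  ext i j
  fin_cases i <;> fin_cases j <;>
  · simp only [ampDamp, pauliTwirl, conjMap, LinearMap.sub_apply, LinearMap.add_apply,
      LinearMap.smul_apply, LinearMap.comp_apply, LinearMap.coe_mk, AddHom.coe_mk,
      Matrix.sub_apply, Matrix.add_apply, Matrix.smul_apply, smul_eq_mul, mul_apply,
      Fin.sum_univ_two, conjTranspose_apply, trace, diag]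
    simp only [σX, σY, σZ, Fin.zero_eta, Fin.mk_one, Fin.isValue, of_apply, cons_val',
      cons_val_zero, cons_val_one, cons_val_fin_one, star_zero, star_one, star_neg,
      RCLike.star_def, Complex.conj_ofReal, Complex.conj_I]
    ring_nf
    simp only [Complex.I_pow_four, hsq, hsq']
    ring

theorem mem_unitaryGroup_σZ : σZ ∈ unitaryGroup (Fin 2) ℂ := by
  rw [mem_unitaryGroup_iff, star_eq_conjTranspose]
  ext i j
  fin_cases i <;> fin_cases j <;> simp [σZ, mul_apply, Fin.sum_univ_two]

theorem traceNorm_idTensor_ampDamp_sub_pauliTwirl {R : Type} [Fintype R] [DecidableEq R]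
    {p : ℝ} (hp₀ : 0 ≤ p) (hp₁ : p ≤ 1) {M : Matrix (R × Fin 2) (R × Fin 2) ℂ}
    (hM : IsDensity M) :
    traceNorm (idTensor (ampDamp p) M - idTensor (pauliTwirl (ampDamp p)) M) = p := by
  have hρ := hM.ptraceRight
  have hp : (0 : ℂ) ≤ p / 2 := by
    rw [← Complex.ofReal_ofNat, ← Complex.ofReal_div, Complex.zero_le_real]
    positivity
  rw [idTensor_sub, idTensor_eq_ptraceRight_kronecker (ampDamp_sub_pauliTwirl hp₀ hp₁),
    kronecker_smul, ← smul_kronecker,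
    traceNorm_kronecker_of_mem_unitaryGroup (hρ.1.smul hp) mem_unitaryGroup_σZ, trace_smul, hρ.2]
  simp

/-- For the amplitude damping channel and its Pauli twirl, the maximally
entangled state maximizes the output trace distance over all pure inputs, and the value
at the maximally entangled state equals p. -/
theorem ampDamp_twirl_maxEnt_optimal (p : ℝ) (hp : p ∈ Set.Icc (0 : ℝ) 1) :
    (∀ v : Fin 2 × Fin 2 → ℂ, IsDensity (vecState v) →
      traceNorm (idTensor (ampDamp p) (vecState v)
          - idTensor (pauliTwirl (ampDamp p)) (vecState v))
        ≤ traceNorm (idTensor (ampDamp p) (maxEnt (Fin 2))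
            - idTensor (pauliTwirl (ampDamp p)) (maxEnt (Fin 2)))) ∧
    traceNorm (idTensor (ampDamp p) (maxEnt (Fin 2))
        - idTensor (pauliTwirl (ampDamp p)) (maxEnt (Fin 2))) = p := by
  have hmax := traceNorm_idTensor_ampDamp_sub_pauliTwirl hp.1 hp.2 (maxEnt_isDensity (Fin 2))
  exact ⟨fun v hv => (traceNorm_idTensor_ampDamp_sub_pauliTwirl hp.1 hp.2 hv).trans hmax.symm |>.le,
    hmax⟩
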